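/- arXiv:2207.06990 — 7 statements merged into one kernel-verified Lean document; each statement's English description precedes it below -/
import Mathlib

section
/- If P(x) ∈ ℚ[x] is irreducible over ℚ and integer-valued (i.e., P(k) ∈ ℤ for all k ∈ ℤ), then M(P) ≥ 1. -/
/-!
Both `‖P(0)‖` and `‖lc P‖` are bounded by `M(P)`. If `P(0) ≠ 0` it is a nonzero integer. Otherwise
irreducibility forces `P = c X`, and then `c = P(1) - P(0)` is a nonzero integer.
-/

open Polynomial

/-- The Mahler measure of a complex polynomial `P = c ∏ (X - αⱼ)` :
`M(P) = |c| ∏ max 1 |αⱼ|`. -/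
noncomputable def mahlerMeasure (P : Polynomial ℂ) : ℝ :=
  ‖P.leadingCoeff‖ * ((P.roots.map (fun a => max 1 ‖a‖)).prod)

theorem mahlerMeasure_eq_polynomial_mahlerMeasure (p : ℂ[X]) :
    _root_.mahlerMeasure p = p.mahlerMeasure :=
  (mahlerMeasure_eq_leadingCoeff_mul_prod_roots p).symm

theorem Complex.one_le_norm_intCast {m : ℤ} (hm : m ≠ 0) : 1 ≤ ‖(m : ℂ)‖ := by
  rw [Complex.norm_intCast]
  exact_mod_cast Int.one_le_abs hm

namespace Polynomial

theorem leadingCoeff_eq_eval_one_sub_eval_zero {R : Type*} [Ring R] {p : R[X]}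
    (h : p.natDegree = 1) : p.leadingCoeff = p.eval 1 - p.eval 0 := by
  rw [leadingCoeff, h]
  conv_rhs => rw [eq_X_add_C_of_natDegree_le_one h.le]
  simp

theorem one_le_mahlerMeasure_of_coeff_zero_eq_intCast {p : ℂ[X]} {m : ℤ} (hm : m ≠ 0)
    (h : p.coeff 0 = m) : 1 ≤ p.mahlerMeasure :=
  calc (1 : ℝ) ≤ ‖(m : ℂ)‖ := Complex.one_le_norm_intCast hm
    _ = ‖p.coeff 0‖ := by rw [h]
    _ ≤ p.mahlerMeasure := by simpa using norm_coeff_le_choose_mul_mahlerMeasure 0 p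

theorem one_le_mahlerMeasure_of_leadingCoeff_eq_intCast {p : ℂ[X]} {m : ℤ} (hm : m ≠ 0)
    (h : p.leadingCoeff = m) : 1 ≤ p.mahlerMeasure :=
  one_le_mahlerMeasure_of_one_le_norm_leadingCoeff <| h ▸ Complex.one_le_norm_intCast hm

end Polynomial

theorem mahler_ge_one_of_irreducible_integer_valued_general (P : Polynomial ℚ)
    (hirr : Irreducible P)
    (hint : ∀ k : ℤ, ∃ m : ℤ, P.eval (k : ℚ) = (m : ℚ)) :
    1 ≤ _root_.mahlerMeasure (P.map (algebraMap ℚ ℂ)) := by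
  rw [mahlerMeasure_eq_polynomial_mahlerMeasure]
  obtain ⟨m₀, h₀⟩ := hint 0
  by_cases hroot : P.IsRoot 0
  · obtain ⟨m₁, h₁⟩ := hint 1
    have hlc : P.leadingCoeff = ((m₁ - m₀ : ℤ) : ℚ) := by
      rw [leadingCoeff_eq_eval_one_sub_eval_zero
        (natDegree_eq_of_degree_eq_some (degree_eq_one_of_irreducible_of_root hirr hroot))]
      push_cast at h₀ h₁ ⊢
      rw [h₀, h₁]
    refine one_le_mahlerMeasure_of_leadingCoeff_eq_intCast (m := m₁ - m₀) ?_ ?_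
    · exact_mod_cast hlc ▸ leadingCoeff_ne_zero.mpr hirr.ne_zero
    · rw [leadingCoeff_map, hlc, map_intCast]
  · refine one_le_mahlerMeasure_of_coeff_zero_eq_intCast (m := m₀) ?_ ?_
    · rintro rfl
      exact hroot (by simpa using h₀)
    · rw [coeff_map, coeff_zero_eq_eval_zero]
      simpa using congrArg (algebraMap ℚ ℂ) h₀

theorem mahler_ge_one_of_irreducible_integer_valued (P : Polynomial ℚ)
    (hirr : Irreducible P) (hdeg : 1 ≤ P.natDegree)
    (hint : ∀ k : ℤ, ∃ m : ℤ, P.eval (k : ℚ) = (m : ℚ)) :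
    1 ≤ _root_.mahlerMeasure (P.map (algebraMap ℚ ℂ)) :=
  mahler_ge_one_of_irreducible_integer_valued_general P hirr hint
end

section
/- For an odd prime p, the polynomial g_p(x) = (x^p - x)/p + 1 has all its complex zeros strictly outside the unit circle. -/
open Polynomial

lemma pow_sub_self_eq_neg_natCast_of_aeval_eq_zero {K : Type*} [Field K] [CharZero K]
    [Algebra ℚ K] {n : ℕ} (hn : n ≠ 0) {α : K}
    (h : aeval α (C (1 / (n : ℚ)) * (X ^ n - X) + 1) = 0) : α ^ n - α = -n := by
  have hn' : (n : K) ≠ 0 := Nat.cast_ne_zero.mpr hn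
  simp only [map_add, map_mul, map_sub, map_pow, aeval_C, aeval_X, map_one, one_div, map_inv₀,
    map_natCast] at h
  field_simp at h
  linear_combination h

lemma one_lt_norm_of_pow_sub_self_eq {R : Type*} [SeminormedRing R] [NormOneClass R] {α c : R}
    {n : ℕ} (h : α ^ n - α = c) (hc : 2 < ‖c‖) : 1 < ‖α‖ := by
  by_contra! hα
  have : ‖α ^ n - α‖ ≤ 2 := calc
    ‖α ^ n - α‖ ≤ ‖α ^ n‖ + ‖α‖ := norm_sub_le _ _
    _ ≤ ‖α‖ ^ n + ‖α‖ := by gcongr; exact norm_pow_le α n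
    _ ≤ 1 + 1 := add_le_add (pow_le_one₀ (norm_nonneg α) hα) hα
    _ = 2 := one_add_one_eq_two
  rw [h] at this
  linarith

theorem roots_of_gp_outside_unit_circle (p : ℕ) (hp : p.Prime) (hodd : Odd p)
    (α : ℂ) (hroot : aeval α ((C (1 / (p : ℚ))) * (X ^ p - X) + 1) = 0) :
    1 < ‖α‖ := by
  have hp3 : 3 ≤ p := by
    obtain ⟨k, rfl⟩ := hodd
    have := hp.two_le
    omega
  refine one_lt_norm_of_pow_sub_self_eq
    (pow_sub_self_eq_neg_natCast_of_aeval_eq_zero hp.ne_zero hroot) ?_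
  rw [norm_neg, Complex.norm_natCast]
  exact_mod_cast hp3
end

section
/- For an odd prime p, the Mahler measure of g_p(x) = (x^p - x)/p + 1 equals 1. -/
open Polynomial

/-!
A root `a` of `(x^p - x)/p + 1` satisfies `a^p - a = -p`; if `‖a‖ < 1` then `‖a^p - a‖ < 2 ≤ p`,
so every root lies outside the open unit disc. The Mahler measure is then
`|c| ∏ |αⱼ| = |g_p(0)| = 1`.
-/

theorem Polynomial.Splits.norm_coeff_zero_eq {K : Type*} [NormedField K] {f : K[X]}
    (hf : f.Splits) : ‖f.coeff 0‖ = ‖f.leadingCoeff‖ * (f.roots.map (‖·‖)).prod := by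
  rw [hf.coeff_zero_eq_leadingCoeff_mul_prod_roots, norm_mul, norm_mul, norm_pow, norm_neg,
    norm_one, one_pow, one_mul]
  exact congrArg _ (map_multiset_prod normHom f.roots)

theorem mahlerMeasure_eq_norm_coeff_zero {P : ℂ[X]} (h : ∀ a ∈ P.roots, 1 ≤ ‖a‖) :
    _root_.mahlerMeasure P = ‖P.coeff 0‖ := by
  rw [(IsAlgClosed.splits P).norm_coeff_zero_eq, _root_.mahlerMeasure,
    Multiset.map_congr rfl fun a ha => max_eq_right (h a ha)]

theorem one_le_norm_of_pow_sub_self_eq_neg_natCast {𝕜 : Type*} [RCLike 𝕜] {a : 𝕜} {n : ℕ}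
    (hn : 2 ≤ n) (h : a ^ n - a = -n) : 1 ≤ ‖a‖ := by
  by_contra! ha
  have : ‖a ^ n - a‖ < 2 :=
    calc ‖a ^ n - a‖ ≤ ‖a‖ ^ n + ‖a‖ := by rw [← norm_pow]; exact norm_sub_le _ _
      _ < 1 + 1 := add_lt_add_of_le_of_lt (pow_le_one₀ (norm_nonneg a) ha.le) ha
      _ = 2 := one_add_one_eq_two
  rw [h, norm_neg, RCLike.norm_natCast] at this
  exact absurd hn (by exact_mod_cast this.not_ge)

theorem one_le_norm_of_inv_natCast_mul_pow_sub_self_add_one_eq_zero {𝕜 : Type*} [RCLike 𝕜]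
    {a : 𝕜} {n : ℕ} (h : (n : 𝕜)⁻¹ * (a ^ n - a) + 1 = 0) : 1 ≤ ‖a‖ := by
  have hn0 : (n : 𝕜) ≠ 0 := by rintro hn; simp [hn] at h
  have hroot : a ^ n - a = -n := by field_simp at h; linear_combination h
  refine one_le_norm_of_pow_sub_self_eq_neg_natCast ?_ hroot
  rcases n with _ | _ | n
  · simp at hn0
  · simp at hroot
  · omega

theorem eval_map_C_one_div_mul_X_pow_sub_X_add_one {K : Type*} [Field K]
    (f : ℚ →+* K) (p : ℕ) (a : K) :
    ((C (1 / (p : ℚ)) * (X ^ p - X) + 1).map f).eval a = (p : K)⁻¹ * (a ^ p - a) + 1 := by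
  simp [one_div]

theorem mahler_of_gp_eq_one_general (p : ℕ) :
    _root_.mahlerMeasure (((C (1 / (p : ℚ))) * (X ^ p - X) + 1).map (algebraMap ℚ ℂ)) = 1 := by
  rw [mahlerMeasure_eq_norm_coeff_zero, coeff_zero_eq_eval_zero,
    eval_map_C_one_div_mul_X_pow_sub_X_add_one]
  · by_cases hp : p = 0 <;> simp [hp]
  intro a ha
  apply one_le_norm_of_inv_natCast_mul_pow_sub_self_add_one_eq_zero
  rw [← eval_map_C_one_div_mul_X_pow_sub_X_add_one, (mem_roots'.mp ha).2]

theorem mahler_of_gp_eq_one (p : ℕ) (hp : p.Prime) (hodd : Odd p) :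
    _root_.mahlerMeasure (((C (1 / (p : ℚ))) * (X ^ p - X) + 1).map (algebraMap ℚ ℂ)) = 1 :=
  mahler_of_gp_eq_one_general p
end

section
/- For an odd prime p, the polynomial x^p - x + p = p·g_p(x) is irreducible over ℚ. -/
open Polynomial

/-!
All complex roots of `X ^ p - X + p` have modulus `> 1`, since `|z| ≤ 1` would give
`p = |z - z ^ p| ≤ 2`. For a monic integer polynomial whose roots all lie outside the unit disc,
`|f(0)|` is the product of the moduli of its roots, so any nonconstant monic factor has constant
term of absolute value `> 1`. As the constant term `p` is prime, one factor of a monic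
factorization has constant term `±1` and must therefore be `1`. Gauss's lemma passes from `ℤ`
to `ℚ`.
-/

theorem Multiset.one_lt_norm_prod {K : Type*} [NormedField K] {s : Multiset K} (hs : s ≠ 0)
    (h : ∀ z ∈ s, 1 < ‖z‖) : 1 < ‖s.prod‖ := by
  obtain ⟨z, hz⟩ := Multiset.exists_mem_of_ne_zero hs
  obtain ⟨t, rfl⟩ := Multiset.exists_cons_of_mem hz
  rw [Multiset.prod_cons, norm_mul, ← normHom_apply t.prod, map_multiset_prod]
  refine one_lt_mul_of_lt_of_le (h z (Multiset.mem_cons_self z t)) (Multiset.one_le_prod ?_)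
  simp only [Multiset.mem_map]
  rintro _ ⟨w, hw, rfl⟩
  exact (h w (Multiset.mem_cons_of_mem hw)).le

theorem one_lt_norm_of_pow_sub_self_add_eq_zero {K : Type*} [NormedDivisionRing K] {z c : K}
    (n : ℕ) (hc : 2 < ‖c‖) (hz : z ^ n - z + c = 0) : 1 < ‖z‖ := by
  by_contra! hz1
  have : ‖c‖ ≤ 2 := calc
    ‖c‖ = ‖z ^ n - z‖ := by rw [eq_neg_of_add_eq_zero_right hz, norm_neg]
    _ ≤ ‖z‖ ^ n + ‖z‖ := by rw [← norm_pow]; exact norm_sub_le _ _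
    _ ≤ 1 + 1 := add_le_add (pow_le_one₀ (norm_nonneg z) hz1) hz1
    _ = 2 := one_add_one_eq_two
  linarith

namespace Polynomial

theorem norm_leadingCoeff_lt_norm_coeff_zero {f : ℂ[X]} (hf : 0 < f.natDegree)
    (hroots : ∀ z ∈ f.roots, 1 < ‖z‖) : ‖f.leadingCoeff‖ < ‖f.coeff 0‖ := by
  have hsplit := IsAlgClosed.splits f
  have hlc : 0 < ‖f.leadingCoeff‖ := by
    simpa using ne_zero_of_natDegree_gt hf
  have hne : f.roots ≠ 0 := by
    rw [← Multiset.card_pos, ← hsplit.natDegree_eq_card_roots]; exact hf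
  rw [hsplit.coeff_zero_eq_leadingCoeff_mul_prod_roots, norm_mul, norm_mul,
    norm_pow, norm_neg, norm_one, one_pow, one_mul]
  exact lt_mul_of_one_lt_right hlc (Multiset.one_lt_norm_prod hne hroots)

theorem one_lt_abs_coeff_zero_of_one_lt_norm_roots {a : ℤ[X]} (ha : 0 < a.natDegree)
    (hroots : ∀ z : ℂ, aeval z a = 0 → 1 < ‖z‖) : 1 < |a.coeff 0| := by
  set g := a.map (Int.castRingHom ℂ)
  have hg : g.natDegree = a.natDegree := natDegree_map_eq_of_injective Int.cast_injective a
  have hlc : 1 ≤ |a.leadingCoeff| :=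
    Int.one_le_abs (leadingCoeff_ne_zero.mpr (ne_zero_of_natDegree_gt ha))
  have hg_roots : ∀ z ∈ g.roots, 1 < ‖z‖ := fun z hz =>
    hroots z (by rw [aeval_def, eval₂_eq_eval_map]; exact (mem_roots'.mp hz).2)
  have key := norm_leadingCoeff_lt_norm_coeff_zero (hg ▸ ha) hg_roots
  rw [leadingCoeff_map_of_injective Int.cast_injective, coeff_map] at key
  simp only [eq_intCast, Complex.norm_intCast, ← Int.cast_abs, Int.cast_lt] at key
  exact hlc.trans_lt key

theorem Monic.eq_one_of_dvd_of_isUnit_coeff_zero {a f : ℤ[X]} (ha : a.Monic) (hdvd : a ∣ f)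
    (hroots : ∀ z : ℂ, aeval z f = 0 → 1 < ‖z‖) (hu : IsUnit (a.coeff 0)) : a = 1 := by
  by_contra ha1
  have hdeg : 0 < a.natDegree := Nat.pos_of_ne_zero (mt ha.natDegree_eq_zero.mp ha1)
  have := one_lt_abs_coeff_zero_of_one_lt_norm_roots hdeg fun z hz =>
    hroots z (aeval_eq_zero_of_dvd_aeval_eq_zero hdvd hz)
  rw [Int.isUnit_iff_abs_eq.mp hu] at this
  exact lt_irrefl 1 this

theorem Monic.irreducible_of_prime_coeff_zero {f : ℤ[X]} (hf : f.Monic) (hf0 : Prime (f.coeff 0))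
    (hroots : ∀ z : ℂ, aeval z f = 0 → 1 < ‖z‖) : Irreducible f := by
  have hf1 : f ≠ 1 := by rintro rfl; exact hf0.not_isUnit (by simp)
  refine (irreducible_of_monic hf hf1).mpr fun a b ha hb hab => ?_
  have hcoeff : f.coeff 0 = a.coeff 0 * b.coeff 0 := by rw [← hab, mul_coeff_zero]
  exact (hf0.irreducible.isUnit_or_isUnit hcoeff).imp
    (ha.eq_one_of_dvd_of_isUnit_coeff_zero (hab ▸ dvd_mul_right a b) hroots)
    (hb.eq_one_of_dvd_of_isUnit_coeff_zero (hab ▸ dvd_mul_left b a) hroots)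

end Polynomial

theorem irreducible_xp_sub_x_add_p (p : ℕ) (hp : p.Prime) (hodd : Odd p) :
    Irreducible (X ^ p - X + C (p : ℚ)) := by
  have hp3 : 3 ≤ p := by
    have : p ≠ 2 := by rintro rfl; exact absurd hodd (by decide)
    have := hp.two_le
    omega
  set f : ℤ[X] := X ^ p - X + C (p : ℤ)
  have hmonic : f.Monic := by
    rw [show f = X ^ p - (X - C (p : ℤ)) from sub_add _ _ _]
    refine monic_X_pow_sub ?_
    rw [degree_X_sub_C]
    exact_mod_cast (by omega : 1 < p)
  have hcoeff : f.coeff 0 = p := by simp [f, hp.ne_zero.symm]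
  have hroots (z : ℂ) (hz : aeval z f = 0) : 1 < ‖z‖ := by
    refine one_lt_norm_of_pow_sub_self_add_eq_zero p ?_ (by simpa [f] using hz)
    rw [Complex.norm_natCast]
    exact_mod_cast hp3
  have hf : f.map (algebraMap ℤ ℚ) = X ^ p - X + C (p : ℚ) := by simp [f]
  rw [← hf, ← hmonic.irreducible_iff_irreducible_map_fraction_map]
  exact hmonic.irreducible_of_prime_coeff_zero (hcoeff ▸ Nat.prime_iff_prime_int.mp hp) hroots
end

section
/- For a prime p ≡ 3 (mod 4), the polynomials f*_p(x) = x^p + p·x^{(p+1)/2} - x + p and its reciprocal x^p·f*_p(1/x) = p·x^p - x^{p-1} + p·x^{(p-1)/2} + 1 have no common complex zero. -/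
theorem no_common_zero_fstar_and_reciprocal (p : ℕ) (hp : p.Prime) (hmod : p % 4 = 3) :
    ¬ ∃ α : ℂ, α ^ p + (p : ℂ) * α ^ ((p + 1) / 2) - α + p = 0 ∧
      (p : ℂ) * α ^ p - α ^ (p - 1) + (p : ℂ) * α ^ ((p - 1) / 2) + 1 = 0 := by
  rintro ⟨α, h1, h2⟩
  obtain ⟨t, rfl⟩ : ∃ t, p = 4 * t + 3 := ⟨p / 4, by omega⟩
  rw [show (4 * t + 3 + 1) / 2 = 2 * t + 2 by omega] at h1
  rw [show 4 * t + 3 - 1 = 4 * t + 2 by omega, show (4 * t + 2) / 2 = 2 * t + 1 by omega] at h2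
  have e1 : α ^ (4 * t + 3) = (α ^ t) ^ 4 * α ^ 3 := by
    rw [show 4 * t + 3 = t * 4 + 3 by ring, pow_add, pow_mul]
  have e2 : α ^ (4 * t + 2) = (α ^ t) ^ 4 * α ^ 2 := by
    rw [show 4 * t + 2 = t * 4 + 2 by ring, pow_add, pow_mul]
  have e3 : α ^ (2 * t + 2) = (α ^ t) ^ 2 * α ^ 2 := by
    rw [show 2 * t + 2 = t * 2 + 2 by ring, pow_add, pow_mul]
  have e4 : α ^ (2 * t + 1) = (α ^ t) ^ 2 * α := by
    rw [show 2 * t + 1 = t * 2 + 1 by ring, pow_add, pow_mul, pow_one]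
  rw [e1, e3] at h1
  rw [e1, e2, e4] at h2
  set b := α ^ t with hbdef
  have hpne : ((4 * t + 3 : ℕ) : ℂ) ≠ 0 := by
    exact Nat.cast_ne_zero.mpr (by omega)
  have key : ((4 * t + 3 : ℕ) : ℂ) * (b ^ 2 * α ^ 2 + 1) ^ 2 = 0 := by
    linear_combination h1 + α * h2
  have hb : b ^ 2 * α ^ 2 = -1 := by
    rcases mul_eq_zero.mp key with h | h
    · exact absurd h hpne
    · have := pow_eq_zero_iff (n := 2) (by norm_num) |>.mp h
      linear_combination this
  have h3 : b ^ 4 * α ^ 3 = α := by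
    linear_combination h1 - ((4 * t + 3 : ℕ) : ℂ) * hb
  have h4 : α ^ 2 = 1 := by
    linear_combination (b ^ 2 * α ^ 2 - 1) * hb - α * h3
  have h5 : b ^ 2 = 1 := by
    rw [hbdef, ← pow_mul, mul_comm, pow_mul, h4, one_pow]
  have h6 : b ^ 2 = -1 := by
    linear_combination hb - b ^ 2 * h4
  rw [h5] at h6
  norm_num at h6
end

section
/- The polynomial x^7 + 7x^4 - x + 7 is irreducible over ℚ. -/
/-!
Modulo 2 the polynomial is `(X + 1)² · (X⁵ + X³ + X² + X + 1)` with an irreducible quintic, so in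
any factorization into monic integer polynomials one factor has degree at least 5. Modulo 3 it is
the product of an irreducible cubic and an irreducible quartic, so the degree of a monic factor
lies in `{0, 3, 4, 7}`. Together only the trivial factorizations survive, and Gauss's lemma carries
irreducibility from `ℤ[X]` to `ℚ[X]`.
-/

open Polynomial

namespace Polynomial

theorem Monic.natDegree_le_or_natDegree_le_of_prime_dvd_map_mul {R S : Type*} [CommRing R]
    [CommRing S] [IsDomain S] (φ : R →+* S) {f g : R[X]} (hf : f.Monic) (hg : g.Monic)
    {Q : S[X]} (hQ : Prime Q) (hdvd : Q ∣ (f * g).map φ) :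
    Q.natDegree ≤ f.natDegree ∨ Q.natDegree ≤ g.natDegree := by
  rw [Polynomial.map_mul] at hdvd
  rw [← hf.natDegree_map φ, ← hg.natDegree_map φ]
  exact (hQ.dvd_or_dvd hdvd).imp
    (natDegree_le_of_dvd · (hf.map φ).ne_zero) (natDegree_le_of_dvd · (hg.map φ).ne_zero)

section Field

variable {K : Type*} [Field K]

theorem Monic.irreducible_of_natDegree_le_five {p : K[X]} (hp : p.Monic)
    (hdeg₀ : 0 < p.natDegree) (hdeg : p.natDegree ≤ 5) (hroot : ∀ x, ¬ p.IsRoot x)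
    (hquad : ∀ a b : K, (∀ x, x ^ 2 + a * x + b ≠ 0) → ¬ X ^ 2 + C a * X + C b ∣ p) :
    Irreducible p := by
  rw [hp.irreducible_iff_lt_natDegree_lt (by rintro rfl; simp at hdeg₀)]
  intro q hq hqdeg hqp
  by_cases hqroot : ∃ x, q.IsRoot x
  · obtain ⟨x, hx⟩ := hqroot
    exact hroot x (hx.dvd hqp)
  simp only [not_exists] at hqroot
  rw [Finset.mem_Ioc] at hqdeg
  obtain hq1 | hq2 : q.natDegree = 1 ∨ q.natDegree = 2 := by omega
  · obtain ⟨r, rfl⟩ := isMonicOfDegree_one_iff.mp ⟨hq1, hq⟩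
    exact hqroot (-r) (by simp)
  · obtain ⟨a, b, rfl⟩ := isMonicOfDegree_two_iff.mp ⟨hq2, hq⟩
    exact hquad a b (fun x hx => hqroot x (by simpa using hx)) hqp

theorem quadratic_not_dvd_of_eq_mul_add {p : K[X]} {a b c d : K} (s : K[X])
    (h : p = (X ^ 2 + C a * X + C b) * s + (C c * X + C d)) (hcd : c ≠ 0 ∨ d ≠ 0) :
    ¬ X ^ 2 + C a * X + C b ∣ p := by
  rw [h, dvd_add_right (dvd_mul_right _ _)]
  refine (isMonicOfDegree_add_add_two a b).monic.not_dvd_of_natDegree_lt ?_ ?_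
  · intro hr
    rcases hcd with hc | hd
    · exact hc (by simpa using congrArg (coeff · 1) hr)
    · exact hd (by simpa using congrArg (coeff · 0) hr)
  · rw [(isMonicOfDegree_add_add_two a b).natDegree_eq]
    exact natDegree_linear_le.trans_lt one_lt_two

theorem natDegree_eq_of_mul_eq_mul_irreducible {f g P Q : K[X]} (hP : Irreducible P)
    (hQ : Irreducible Q) (h : f * g = P * Q) :
    f.natDegree = 0 ∨ f.natDegree = P.natDegree ∨ f.natDegree = Q.natDegree ∨
      f.natDegree = P.natDegree + Q.natDegree := by
  have hPQ : P * Q ≠ 0 := mul_ne_zero hP.ne_zero hQ.ne_zero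
  have hf : f ≠ 0 := left_ne_zero_of_mul (h ▸ hPQ)
  have hg : g ≠ 0 := right_ne_zero_of_mul (h ▸ hPQ)
  have hdeg := natDegree_mul hf hg
  rw [h, natDegree_mul hP.ne_zero hQ.ne_zero] at hdeg
  have split_Q : ∀ t u : K[X], t * u = Q → t.natDegree = 0 ∨ u.natDegree = 0 := fun t u htu =>
    (hQ.isUnit_or_isUnit htu.symm).imp natDegree_eq_zero_of_isUnit natDegree_eq_zero_of_isUnit
  rcases hP.prime.dvd_or_dvd (h ▸ dvd_mul_right P Q) with ⟨t, rfl⟩ | ⟨t, rfl⟩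
  · have htg : t * g = Q := mul_left_cancel₀ hP.ne_zero (by rw [← mul_assoc, h])
    rw [natDegree_mul hP.ne_zero (right_ne_zero_of_mul hf)] at hdeg ⊢
    have := split_Q t g htg
    omega
  · have hft : f * t = Q := mul_left_cancel₀ hP.ne_zero (by rw [← h]; ring)
    have := natDegree_mul hf (right_ne_zero_of_mul hg)
    rw [hft] at this
    have := split_Q f t hft
    omega

end Field

end Polynomial

theorem irreducible_quintic_zmod_two :
    Irreducible (X ^ 5 + X ^ 3 + X ^ 2 + X + 1 : (ZMod 2)[X]) := by
  have hdeg : (X ^ 5 + X ^ 3 + X ^ 2 + X + 1 : (ZMod 2)[X]).natDegree = 5 := by compute_degree!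
  refine Monic.irreducible_of_natDegree_le_five (by monicity!) (by omega) (by omega) ?_ ?_
  · simp only [IsRoot.def, eval_add, eval_pow, eval_X, eval_one]
    decide
  · intro a b hab
    obtain ⟨rfl, rfl⟩ : a = 1 ∧ b = 1 := by revert a b; decide
    refine quadratic_not_dvd_of_eq_mul_add (X ^ 3 - X ^ 2 + X + 1) (c := -1) (d := 0) ?_
      (by decide)
    simp only [map_one, map_zero, map_neg]
    ring

theorem irreducible_cubic_zmod_three :
    Irreducible (X ^ 3 + 2 * X ^ 2 + 2 * X + 2 : (ZMod 3)[X]) := by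
  have hm : (X ^ 3 + 2 * X ^ 2 + 2 * X + 2 : (ZMod 3)[X]).Monic := by monicity!
  have hdeg : (X ^ 3 + 2 * X ^ 2 + 2 * X + 2 : (ZMod 3)[X]).natDegree = 3 := by compute_degree!
  rw [hm.irreducible_iff_roots_eq_zero_of_degree_le_three (by omega) (by omega),
    Multiset.eq_zero_iff_forall_notMem]
  intro x
  rw [mem_roots hm.ne_zero]
  simp only [IsRoot.def, eval_add, eval_pow, eval_X, eval_mul, eval_ofNat]
  revert x
  decide

theorem irreducible_quartic_zmod_three :
    Irreducible (X ^ 4 + X ^ 3 + 2 * X ^ 2 + 2 * X + 2 : (ZMod 3)[X]) := by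
  have hdeg : (X ^ 4 + X ^ 3 + 2 * X ^ 2 + 2 * X + 2 : (ZMod 3)[X]).natDegree = 4 := by
    compute_degree!
  refine Monic.irreducible_of_natDegree_le_five (by monicity!) (by omega) (by omega) ?_ ?_
  · simp only [IsRoot.def, eval_add, eval_pow, eval_X, eval_mul, eval_ofNat]
    decide
  · intro a b hab
    obtain ⟨rfl, rfl⟩ | ⟨rfl, rfl⟩ | ⟨rfl, rfl⟩ :
        a = 0 ∧ b = 1 ∨ a = 1 ∧ b = 2 ∨ a = 2 ∧ b = 2 := by
      revert a b; decide
    · refine quadratic_not_dvd_of_eq_mul_add (X ^ 2 + X + 1) (c := 1) (d := 1) ?_ (by decide)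
      simp only [map_one, map_zero]
      ring
    · refine quadratic_not_dvd_of_eq_mul_add (X ^ 2) (c := 2) (d := 2) ?_ (by decide)
      simp only [map_one, map_ofNat]
      ring
    · refine quadratic_not_dvd_of_eq_mul_add (X ^ 2 - X + 2) (c := 0) (d := -2) ?_ (by decide)
      simp only [map_zero, map_neg, map_ofNat]
      ring

theorem map_zmod_two_eq :
    (X ^ 7 + 7 * X ^ 4 - X + 7 : ℤ[X]).map (Int.castRingHom (ZMod 2)) =
      (X + 1) ^ 2 * (X ^ 5 + X ^ 3 + X ^ 2 + X + 1) := by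
  simp only [Polynomial.map_add, Polynomial.map_sub, Polynomial.map_mul, Polynomial.map_pow,
    Polynomial.map_ofNat, Polynomial.map_X]
  ring_nf
  reduce_mod_char

theorem map_zmod_three_eq :
    (X ^ 7 + 7 * X ^ 4 - X + 7 : ℤ[X]).map (Int.castRingHom (ZMod 3)) =
      (X ^ 3 + 2 * X ^ 2 + 2 * X + 2) * (X ^ 4 + X ^ 3 + 2 * X ^ 2 + 2 * X + 2) := by
  simp only [Polynomial.map_add, Polynomial.map_sub, Polynomial.map_mul, Polynomial.map_pow,
    Polynomial.map_ofNat, Polynomial.map_X]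
  ring_nf
  reduce_mod_char
  ring

theorem monic_f7_int : (X ^ 7 + 7 * X ^ 4 - X + 7 : ℤ[X]).Monic := by
  monicity!

theorem irreducible_f7_int : Irreducible (X ^ 7 + 7 * X ^ 4 - X + 7 : ℤ[X]) := by
  have h7 : (X ^ 7 + 7 * X ^ 4 - X + 7 : ℤ[X]).natDegree = 7 := by compute_degree!
  refine monic_f7_int.irreducible_iff_natDegree.mpr
    ⟨fun h => by simp [h] at h7, fun f g hf hg hfg => ?_⟩
  have hdeg : f.natDegree + g.natDegree = 7 := hf.natDegree_mul hg ▸ hfg ▸ h7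
  have mod_two := hf.natDegree_le_or_natDegree_le_of_prime_dvd_map_mul (Int.castRingHom (ZMod 2))
    hg irreducible_quintic_zmod_two.prime
    (by rw [hfg, map_zmod_two_eq]; exact dvd_mul_left _ _)
  have mod_three := natDegree_eq_of_mul_eq_mul_irreducible (f := f.map (Int.castRingHom (ZMod 3)))
    irreducible_cubic_zmod_three irreducible_quartic_zmod_three
    (by rw [← map_zmod_three_eq, ← hfg, Polynomial.map_mul])
  have h3 : (X ^ 3 + 2 * X ^ 2 + 2 * X + 2 : (ZMod 3)[X]).natDegree = 3 := by compute_degree!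
  have h4 : (X ^ 4 + X ^ 3 + 2 * X ^ 2 + 2 * X + 2 : (ZMod 3)[X]).natDegree = 4 := by
    compute_degree!
  have h5 : (X ^ 5 + X ^ 3 + X ^ 2 + X + 1 : (ZMod 2)[X]).natDegree = 5 := by compute_degree!
  rw [hf.natDegree_map, h3, h4] at mod_three
  rw [h5] at mod_two
  omega

theorem irreducible_f7 : Irreducible (X ^ 7 + 7 * X ^ 4 - X + 7 : Polynomial ℚ) := by
  simpa using monic_f7_int.irreducible_iff_irreducible_map_fraction_map.mp irreducible_f7_int
end

section
/- Let P ∈ ℂ[x] be a polynomial and N ≥ 1 an integer such that x·P(x^N) + 1 has no roots on the unit circle. Then m(1 + (-1)^{N+1}/(x·P(x)^N)) = N · m(1 + 1/(x·P(x^N))), where m denotes the logarithmic Mahler measure given by the integral m(F) = (1/2π)∫₀^{2π} log|F(e^{iθ})| dθ. -/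
open Polynomial Real

/-- Logarithmic Mahler measure of a function on the unit circle. -/
noncomputable def logMahler (F : ℂ → ℂ) : ℝ :=
  (1 / (2 * π)) * ∫ θ in (0 : ℝ)..(2 * π), Real.log ‖F (Complex.exp (θ * Complex.I))‖

/-!
Write `F z = 1 + (-1)^(N+1) / (z P(z)^N)` and `G z = 1 + 1 / (z P(z^N))`, and put
`w = z P(z^N)`. Evaluating `X^N - Y^N = ∏_{ζ^N = 1} (X - ζ Y)` at `X = 1`, `Y = -1/w` gives
`F (z^N) = 1 - (-1/w)^N = ∏_{ζ^N = 1} (1 + ζ/w) = ∏_{ζ^N = 1} G (ζ⁻¹ z)`.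
No factor vanishes on the unit circle, so there `log ‖F (z^N)‖ = ∑_ζ log ‖G (ζ⁻¹ z)‖`.
Both `log ‖F‖` and `log ‖G‖` are integrable on the circle (they are logarithms of meromorphic
functions), the substitution `z ↦ z^N` preserves the mean over the circle, and so does each
rotation `z ↦ ζ⁻¹ z`; averaging the identity therefore gives `m(F) = N · m(G)`.
-/

@[fun_prop]
theorem AnalyticAt.polynomial_eval {𝕜 E A : Type*} [NontriviallyNormedField 𝕜]
    [NormedAddCommGroup E] [NormedSpace 𝕜 E] [NormedCommRing A] [NormedAlgebra 𝕜 A]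
    {f : E → A} {z : E} (hf : AnalyticAt 𝕜 f z) (p : A[X]) :
    AnalyticAt 𝕜 (fun x => p.eval (f x)) z := by
  simpa [coe_aeval_eq_eval] using hf.aeval_polynomial p

theorem IsPrimitiveRoot.prod_one_add_div {K : Type*} [Field K] {μ : K} {n : ℕ}
    (h : IsPrimitiveRoot μ n) (hn : 0 < n) (w : K) :
    ∏ ζ ∈ nthRootsFinset n (1 : K), (1 + ζ / w) = 1 + (-1) ^ (n + 1) / w ^ n := by
  calc ∏ ζ ∈ nthRootsFinset n (1 : K), (1 + ζ / w)
      = ∏ ζ ∈ nthRootsFinset n (1 : K), (1 - ζ * -w⁻¹) := by simp [div_eq_mul_inv]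
    _ = 1 ^ n - (-w⁻¹) ^ n := (h.pow_sub_pow_eq_prod_sub_mul 1 (-w⁻¹) hn).symm
    _ = 1 + (-1) ^ (n + 1) / w ^ n := by rw [neg_pow, inv_pow]; ring

theorem one_add_one_div_ne_zero {K : Type*} [DivisionRing K] {u : K} (hu : u + 1 ≠ 0) :
    1 + 1 / u ≠ 0 := by
  rcases eq_or_ne u 0 with rfl | hu0
  · simp
  · rw [one_div, ← mul_inv_cancel₀ hu0, ← add_one_mul]
    exact mul_ne_zero hu (inv_ne_zero hu0)

namespace Real

variable {E : Type*} [NormedAddCommGroup E] [NormedSpace ℝ E] {f : ℂ → E}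

theorem circleAverage_comp_mul_left {ζ : ℂ} (hζ : ‖ζ‖ = 1) (R : ℝ) :
    circleAverage (fun z => f (ζ * z)) 0 R = circleAverage f 0 R := by
  have hrot (θ : ℝ) : ζ * circleMap 0 R θ = circleMap 0 R (θ + ζ.arg) := by
    have hζ' : ζ = circleMap 0 1 ζ.arg := by
      simpa [circleMap_zero, hζ] using (Complex.norm_mul_exp_arg_mul_I ζ).symm
    rw [hζ', circleMap_zero_mul, one_mul, add_comm, ← hζ']
  rw [circleAverage_eq_integral_add ζ.arg (f := f), circleAverage_def]
  simp_rw [hrot]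

theorem circleAverage_comp_pow {R : ℝ} {n : ℕ} (hn : n ≠ 0)
    (hf : CircleIntegrable f 0 (R ^ n)) :
    circleAverage (fun z => f (z ^ n)) 0 R = circleAverage f 0 (R ^ n) := by
  set g : ℝ → E := fun θ => f (circleMap 0 (R ^ n) θ)
  have hg : Function.Periodic g (2 * π) := fun θ => by simp [g, periodic_circleMap _ _ θ]
  have hn' : (n : ℝ) ≠ 0 := Nat.cast_ne_zero.mpr hn
  calc circleAverage (fun z => f (z ^ n)) 0 R
      = (2 * π)⁻¹ • ∫ θ in 0..2 * π, g (n * θ) := by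
        simp only [circleAverage_def, circleMap_zero_pow, g]
    _ = (2 * π)⁻¹ • (n : ℝ)⁻¹ • ∫ θ in 0..0 + (n : ℤ) • (2 * π), g θ := by
        rw [intervalIntegral.integral_comp_mul_left g hn', mul_zero, zero_add, natCast_zsmul,
          nsmul_eq_mul]
    _ = circleAverage f 0 (R ^ n) := by
        rw [hg.intervalIntegral_add_zsmul_eq n 0 (hg.intervalIntegrable₀ two_pi_pos.ne' hf),
          zero_add, natCast_zsmul, ← Nat.cast_smul_eq_nsmul ℝ, inv_smul_smul₀ hn',
          circleAverage_def]

end Real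

theorem logMahler_eq_circleAverage (F : ℂ → ℂ) :
    logMahler F = circleAverage (fun z => log ‖F z‖) 0 1 := by
  simp [logMahler, circleAverage_def, circleMap_zero, one_div]

theorem logMahler_rescale (P : Polynomial ℂ) (N : ℕ) (hN : 1 ≤ N)
    (hroots : ∀ z : ℂ, ‖z‖ = 1 → z * P.eval (z ^ N) + 1 ≠ 0) :
    logMahler (fun z => 1 + (-1) ^ (N + 1) / (z * (P.eval z) ^ N)) =
      N * logMahler (fun z => 1 + 1 / (z * P.eval (z ^ N))) := by
  set F : ℂ → ℂ := fun z => 1 + (-1) ^ (N + 1) / (z * (P.eval z) ^ N)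
  set G : ℂ → ℂ := fun z => 1 + 1 / (z * P.eval (z ^ N))
  set μN := nthRootsFinset N (1 : ℂ)
  have hN0 : N ≠ 0 := by omega
  have hμ := Complex.isPrimitiveRoot_exp N hN0
  have hμN (ζ : ℂ) (hζ : ζ ∈ μN) : ζ⁻¹ ^ N = 1 := by
    rw [inv_pow, (mem_nthRootsFinset hN 1).mp hζ, inv_one]
  have hG_rot (ζ : ℂ) (hζ : ζ ∈ μN) (z : ℂ) : G (ζ⁻¹ * z) = 1 + ζ / (z * P.eval (z ^ N)) := by
    simp only [G, mul_pow, hμN ζ hζ, one_mul, one_div, mul_inv, inv_inv]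
    ring
  have hF_pow (z : ℂ) : F (z ^ N) = ∏ ζ ∈ μN, G (ζ⁻¹ * z) := by
    rw [Finset.prod_congr rfl (fun ζ hζ => hG_rot ζ hζ z), hμ.prod_one_add_div hN, mul_pow]
  have hlog : Set.EqOn (fun z => log ‖F (z ^ N)‖) (fun z => ∑ ζ ∈ μN, log ‖G (ζ⁻¹ * z)‖)
      (Metric.sphere 0 |1|) := by
    intro z hz
    rw [abs_one, mem_sphere_zero_iff_norm] at hz
    simp only [hF_pow, norm_prod]
    refine log_prod fun ζ hζ => norm_ne_zero_iff.mpr (one_add_one_div_ne_zero (hroots _ ?_))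
    rw [norm_mul, Complex.norm_eq_one_of_pow_eq_one (hμN ζ hζ) hN0, hz, one_mul]
  have hG_int (ζ : ℂ) : CircleIntegrable (fun z => log ‖G (ζ * z)‖) 0 1 :=
    MeromorphicOn.circleIntegrable_log_norm fun z _ => by fun_prop
  have hF_int : CircleIntegrable (fun z => log ‖F z‖) 0 (1 ^ N) :=
    MeromorphicOn.circleIntegrable_log_norm fun z _ => by fun_prop
  calc logMahler F
      = circleAverage (fun z => log ‖F (z ^ N)‖) 0 1 := by
        simpa [logMahler_eq_circleAverage] using (circleAverage_comp_pow hN0 hF_int).symm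
    _ = ∑ ζ ∈ μN, circleAverage (fun z => log ‖G (ζ⁻¹ * z)‖) 0 1 := by
        rw [circleAverage_congr_sphere hlog, circleAverage_fun_sum fun ζ _ => hG_int ζ⁻¹]
    _ = N * logMahler G := by
        rw [Finset.sum_congr rfl fun ζ hζ => circleAverage_comp_mul_left
            (f := fun z => log ‖G z‖) (Complex.norm_eq_one_of_pow_eq_one (hμN ζ hζ) hN0) 1,
          Finset.sum_const, hμ.card_nthRootsFinset, nsmul_eq_mul, logMahler_eq_circleAverage]
end
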